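/- arXiv:math/9511221 — 4 statements merged into one kernel-verified Lean document; each statement's English description precedes it below -/
import Mathlib

section
/- Let f : I → I be a continuous map of a compact interval and p a fixed point of f. Define the unstable manifold W^u(p,f) as the set of points x such that for every open neighborhood V of p there exists n ≥ 1 with x ∈ f^n(V). Then W^u(p,f) is a connected set containing p and is invariant under f, i.e., f(W^u(p,f)) ⊆ W^u(p,f). -/
/-!
For an interval neighbourhood `V` of `p`, every `f^n (V ∩ I)` is a connected set containing the
fixed point `p`, so their union over `n ≥ 1` is an interval. Interval neighbourhoods are cofinal
among all neighbourhoods of `p`, hence any point between two points of `W^u(p, f)` lies in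
`W^u(p, f)`.
-/

/-- The unstable manifold of a fixed point `p` of `f` on the interval `I`:
points `x ∈ I` such that for every open neighborhood `V` of `p` (in `ℝ`),
`x ∈ f^[n] '' (V ∩ I)` for some `n ≥ 1`. -/
def unstableManifold (f : ℝ → ℝ) (I : Set ℝ) (p : ℝ) : Set ℝ :=
  {x ∈ I | ∀ V : Set ℝ, IsOpen V → p ∈ V → ∃ n : ℕ, 1 ≤ n ∧ x ∈ f^[n] '' (V ∩ I)}

open Set

theorem isPreconnected_iUnion_iterate_image {α : Type*} [TopologicalSpace α] {f : α → α}
    {I S : Set α} {p : α} (hf : ContinuousOn f I) (hmap : MapsTo f I I)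
    (hS : IsPreconnected S) (hSI : S ⊆ I) (hpS : p ∈ S) (hfp : f p = p) :
    IsPreconnected (⋃ n : {n : ℕ // 1 ≤ n}, f^[n] '' S) :=
  isPreconnected_iUnion ⟨p, mem_iInter.2 fun n => ⟨p, hpS, Function.iterate_fixed hfp n⟩⟩
    fun n => hS.image _ ((hf.iterate hmap n).mono hSI)

section UnstableManifold

variable {f : ℝ → ℝ} {I : Set ℝ} {p : ℝ}

theorem self_mem_unstableManifold (hp : p ∈ I) (hfp : f p = p) : p ∈ unstableManifold f I p :=
  ⟨hp, fun _ _ hpV => ⟨1, le_rfl, p, ⟨hpV, hp⟩, hfp⟩⟩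

theorem mapsTo_unstableManifold (hmap : MapsTo f I I) :
    MapsTo f (unstableManifold f I p) (unstableManifold f I p) := by
  rintro x ⟨hxI, hx⟩
  refine ⟨hmap hxI, fun V hV hpV => ?_⟩
  obtain ⟨n, -, y, hyV, rfl⟩ := hx V hV hpV
  exact ⟨n + 1, Nat.le_add_left 1 n, y, hyV, Function.iterate_succ_apply' f n y⟩

theorem ordConnected_unstableManifold (hI : I.OrdConnected) (hf : ContinuousOn f I)
    (hmap : MapsTo f I I) (hp : p ∈ I) (hfp : f p = p) :
    (unstableManifold f I p).OrdConnected := by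
  refine ⟨fun x ⟨hxI, hx⟩ y ⟨hyI, hy⟩ z hz => ⟨hI.out hxI hyI hz, fun V hV hpV => ?_⟩⟩
  obtain ⟨ε, hε, hεV⟩ := Metric.isOpen_iff.1 hV p hpV
  set B := Metric.ball p ε
  have hpB : p ∈ B := Metric.mem_ball_self hε
  have hBI : IsPreconnected (B ∩ I) :=
    ((convex_ball p ε).ordConnected.inter hI).isPreconnected
  have hU : (⋃ n : {n : ℕ // 1 ≤ n}, f^[n] '' (B ∩ I)).OrdConnected :=
    (isPreconnected_iUnion_iterate_image hf hmap hBI inter_subset_right ⟨hpB, hp⟩ hfp).ordConnected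
  obtain ⟨n, hn, hxn⟩ := hx B Metric.isOpen_ball hpB
  obtain ⟨m, hm, hym⟩ := hy B Metric.isOpen_ball hpB
  have hzU := hU.out (mem_iUnion.2 ⟨⟨n, hn⟩, hxn⟩) (mem_iUnion.2 ⟨⟨m, hm⟩, hym⟩) hz
  obtain ⟨⟨n, hn⟩, hzn⟩ := mem_iUnion.1 hzU
  exact ⟨n, hn, image_mono (inter_subset_inter_left I hεV) hzn⟩

end UnstableManifold

theorem unstableManifold_connected_mem_invariant_general
    (a b : ℝ) (f : ℝ → ℝ) (p : ℝ)
    (hf : ContinuousOn f (Set.Icc a b))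
    (hmap : Set.MapsTo f (Set.Icc a b) (Set.Icc a b))
    (hp : p ∈ Set.Icc a b) (hfp : f p = p) :
    IsConnected (unstableManifold f (Set.Icc a b) p) ∧
    p ∈ unstableManifold f (Set.Icc a b) p ∧
    f '' unstableManifold f (Set.Icc a b) p ⊆ unstableManifold f (Set.Icc a b) p := by
  have hpW := self_mem_unstableManifold (f := f) hp hfp
  have hW := ordConnected_unstableManifold ordConnected_Icc hf hmap hp hfp
  exact ⟨⟨⟨p, hpW⟩, hW.isPreconnected⟩, hpW, (mapsTo_unstableManifold hmap).image_subset⟩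

theorem unstableManifold_connected_mem_invariant
    (a b : ℝ) (hab : a ≤ b) (f : ℝ → ℝ) (p : ℝ)
    (hf : ContinuousOn f (Set.Icc a b))
    (hmap : Set.MapsTo f (Set.Icc a b) (Set.Icc a b))
    (hp : p ∈ Set.Icc a b) (hfp : f p = p) :
    IsConnected (unstableManifold f (Set.Icc a b) p) ∧
    p ∈ unstableManifold f (Set.Icc a b) p ∧
    f '' unstableManifold f (Set.Icc a b) p ⊆ unstableManifold f (Set.Icc a b) p :=
  unstableManifold_connected_mem_invariant_general a b f p hf hmap hp hfp
end

section
/- There exists a continuous map f : [0,1] → [0,1] whose set of periods is {2^n : n ∈ ℕ} and whose set of accumulation points of periodic points is a single point (which is periodic). Hence the conclusion of Lemma 1 fails without the piecewise-monotonicity assumption. -/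
/-- The set of periodic points of `f` lying in `I`. -/
def periodicPts (f : ℝ → ℝ) (I : Set ℝ) : Set ℝ :=
  {x ∈ I | ∃ n : ℕ, 1 ≤ n ∧ f^[n] x = x}

/-- The set of least periods of periodic points of `f` in `I`. -/
def periodSet (f : ℝ → ℝ) (I : Set ℝ) : Set ℕ :=
  {n | 1 ≤ n ∧ ∃ x ∈ I, Function.minimalPeriod f x = n}

/-!
`double g` is the period-doubling renormalisation of `g`: it maps `[0, 1/3]` onto `[2/3, 1]` by
translation and `[2/3, 1]` back by a copy of `g`, so its square on `[0, 1/3]` is conjugate to `g`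
by `y ↦ y / 3`; the middle branch is expanding and contributes a single fixed point. Hence
`cascade n = double^[n] 0` has finitely many periodic points, all of period a power of two, and
`0` has period `2 ^ n`. Padding `cascade (n + 1)` with expanding branches fixing `0` and `1` and
copying it onto each block `[1/2^(n+1), 1/2^n]` gives a continuous map with invariant blocks: every
block has finitely many periodic points, every power of two is a period, and the periodic points
accumulate only at the fixed point `0`.
-/

open Set Function Filter Topology unitInterval

namespace Function

variable {α β : Type*} {f : α → α} {x : α}

theorem mem_of_mem_periodicPts_of_iterate_mem {t : Set α} (hx : x ∈ periodicPts f)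
    (ht : MapsTo f t t) {k : ℕ} (hk : f^[k] x ∈ t) : x ∈ t := by
  have hper := (isPeriodicPt_minimalPeriod f x).mul_const k
  have hle : k ≤ minimalPeriod f x * k :=
    Nat.le_mul_of_pos_left k (minimalPeriod_pos_of_mem_periodicPts hx)
  rw [← hper.eq, ← Nat.sub_add_cancel hle, iterate_add_apply]
  exact ht.iterate _ hk

theorem iterate_mem_of_mapsTo_union {s t : Set α} (hs : MapsTo f s (s ∪ t)) (ht : MapsTo f t t)
    (hx : x ∈ periodicPts f) (hxs : x ∈ s) (hxt : x ∉ t) (k : ℕ) : f^[k] x ∈ s := by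
  induction k with
  | zero => exact hxs
  | succ k ih =>
    have hk : f^[k + 1] x ∈ s ∪ t := by rw [iterate_succ_apply']; exact hs ih
    exact hk.resolve_right fun h ↦ hxt (mem_of_mem_periodicPts_of_iterate_mem hx ht h)

theorem iterate_apply_eq_of_semiconjOn {F : β → β} {g : α → α} {e : α → β} {s : Set α}
    (hg : MapsTo g s s) (h : ∀ y ∈ s, F (e y) = e (g y)) {y : α} (hy : y ∈ s) (k : ℕ) :
    F^[k] (e y) = e (g^[k] y) := by
  induction k with
  | zero => rfl
  | succ k ih => rw [iterate_succ_apply', ih, h _ (hg.iterate k hy), iterate_succ_apply']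

theorem minimalPeriod_eq_of_semiconjOn {F : β → β} {g : α → α} {e : α → β} {s : Set α}
    (he : Injective e) (hg : MapsTo g s s) (h : ∀ y ∈ s, F (e y) = e (g y)) {y : α}
    (hy : y ∈ s) : minimalPeriod F (e y) = minimalPeriod g y :=
  minimalPeriod_eq_minimalPeriod_iff.2 fun n ↦ by
    simp only [IsPeriodicPt, IsFixedPt, iterate_apply_eq_of_semiconjOn hg h hy, he.eq_iff]

section Expanding

variable [MetricSpace α] {s : Set α} {c : ℝ}

theorem isFixedPt_of_mem_periodicPts_of_expanding (hc : 1 < c)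
    (hexp : ∀ u ∈ s, ∀ v ∈ s, c * dist u v ≤ dist (f u) (f v))
    (horb : ∀ k, f^[k] x ∈ s) (hx : x ∈ periodicPts f) : IsFixedPt f x := by
  have hgrowth : ∀ k, c ^ k * dist x (f x) ≤ dist (f^[k] x) (f^[k] (f x)) := by
    intro k
    induction k with
    | zero => simp
    | succ k ih =>
      calc c ^ (k + 1) * dist x (f x) = c * (c ^ k * dist x (f x)) := by ring
        _ ≤ c * dist (f^[k] x) (f^[k] (f x)) := by gcongr
        _ ≤ dist (f (f^[k] x)) (f (f^[k] (f x))) :=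
          hexp _ (horb k) _ (by rw [← iterate_succ_apply]; exact horb _)
        _ = dist (f^[k + 1] x) (f^[k + 1] (f x)) := by simp only [iterate_succ_apply']
  obtain ⟨n, hn, hper⟩ := hx
  have hcn : 1 < c ^ n := one_lt_pow₀ hc hn.ne'
  have h := hgrowth n
  rw [hper.eq, hper.apply.eq] at h
  exact (dist_le_zero.1 (by nlinarith [dist_nonneg (x := x) (y := f x)])).symm

theorem subsingleton_fixedPoints_of_expanding (hc : 1 < c)
    (hexp : ∀ u ∈ s, ∀ v ∈ s, c * dist u v ≤ dist (f u) (f v)) :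
    (s ∩ fixedPoints f).Subsingleton := by
  rintro u ⟨hu, hfu⟩ v ⟨hv, hfv⟩
  have h := hexp u hu v hv
  rw [hfu.eq, hfv.eq] at h
  exact dist_le_zero.1 (by nlinarith [dist_nonneg (x := u) (y := v)])

end Expanding

end Function

theorem mem_periodicPts_iff {f : ℝ → ℝ} {s : Set ℝ} {x : ℝ} :
    x ∈ periodicPts f s ↔ x ∈ s ∧ x ∈ Function.periodicPts f := Iff.rfl

theorem periodSet_eq_image (f : ℝ → ℝ) (s : Set ℝ) :
    periodSet f s = minimalPeriod f '' periodicPts f s := by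
  ext n
  constructor
  · rintro ⟨hn, x, hx, rfl⟩
    exact ⟨x, ⟨hx, minimalPeriod_pos_iff_mem_periodicPts.1 hn⟩, rfl⟩
  · rintro ⟨x, ⟨hx, hper⟩, rfl⟩
    exact ⟨minimalPeriod_pos_of_mem_periodicPts hper, x, hx, rfl⟩

noncomputable section

def double (g : ℝ → ℝ) (x : ℝ) : ℝ :=
  if x ≤ 1 / 3 then x + 2 / 3
  else if x ≤ 2 / 3 then 1 + (g 0 - 3) * (x - 1 / 3)
  else g (3 * x - 2) / 3

section Double

variable {g : ℝ → ℝ} {x y : ℝ}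

theorem double_of_le (hx : x ≤ 1 / 3) : double g x = x + 2 / 3 := if_pos hx

theorem double_of_mem_Icc (hx : x ∈ Icc (1 / 3 : ℝ) (2 / 3)) :
    double g x = 1 + (g 0 - 3) * (x - 1 / 3) := by
  rcases hx.1.eq_or_lt with rfl | h
  · rw [double_of_le le_rfl]; ring
  · rw [double, if_neg h.not_ge, if_pos hx.2]

theorem double_of_ge (hx : 2 / 3 ≤ x) : double g x = g (3 * x - 2) / 3 := by
  rcases hx.eq_or_lt with rfl | h
  · rw [double_of_mem_Icc ⟨by norm_num, le_rfl⟩]; norm_num; ring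
  · rw [double, if_neg (by linarith), if_neg h.not_ge]

theorem continuous_double (hg : Continuous g) : Continuous (double g) := by
  refine Continuous.if_le (by fun_prop) (Continuous.if_le (by fun_prop) (by fun_prop)
    continuous_id continuous_const fun x hx ↦ ?_) continuous_id continuous_const fun x hx ↦ ?_
  · subst hx; norm_num; ring
  · subst hx; norm_num

theorem mapsTo_double_left : MapsTo (double g) (Icc 0 (1 / 3)) (Icc (2 / 3) 1) := fun x hx ↦ by
  rw [double_of_le hx.2]; constructor <;> linarith [hx.1, hx.2]

theorem mapsTo_double_right (hg : MapsTo g I I) :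
    MapsTo (double g) (Icc (2 / 3) 1) (Icc 0 (1 / 3)) := fun x hx ↦ by
  have := @hg (3 * x - 2) ⟨by linarith [hx.1], by linarith [hx.2]⟩
  rw [double_of_ge hx.1]; constructor <;> linarith [this.1, this.2]

theorem mapsTo_double (hg : MapsTo g I I) : MapsTo (double g) I I := by
  intro x hx
  have h0 := hg unitInterval.zero_mem
  rcases le_or_gt x (1 / 3) with h1 | h1
  · exact Icc_subset_Icc (by norm_num) le_rfl (mapsTo_double_left ⟨hx.1, h1⟩)
  rcases le_or_gt x (2 / 3) with h2 | h2
  · rw [double_of_mem_Icc ⟨h1.le, h2⟩]; constructor <;> nlinarith [h0.1, h0.2]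
  · exact Icc_subset_Icc le_rfl (by norm_num) (mapsTo_double_right hg ⟨h2.le, hx.2⟩)

theorem double_double_div_three (hy : y ∈ I) : double g (double g (y / 3)) = g y / 3 := by
  rw [double_of_le (x := y / 3) (by linarith [hy.2]), double_of_ge (by linarith [hy.1]),
    show 3 * (y / 3 + 2 / 3) - 2 = y by ring]

theorem minimalPeriod_double_div_three (hg : MapsTo g I I) (hy : y ∈ I) :
    minimalPeriod (double g) (y / 3) = 2 * minimalPeriod g y := by
  have hconj : ∀ y ∈ I, (double g)^[2] (y / 3) = g y / 3 := fun _ hy ↦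
    double_double_div_three hy
  have hsq : minimalPeriod (double g)^[2] (y / 3) = minimalPeriod g y :=
    minimalPeriod_eq_of_semiconjOn (fun _ _ h ↦ (div_left_inj' three_ne_zero).1 h) hg hconj hy
  -- an odd iterate of a point of `[0, 1/3]` lies in `[2/3, 1]`
  obtain ⟨t, ht | ht⟩ := Nat.even_or_odd' (minimalPeriod (double g) (y / 3))
  · rw [minimalPeriod_iterate_eq_div_gcd two_ne_zero, ht, Nat.gcd_mul_right_left] at hsq
    omega
  · have h := iterate_minimalPeriod (f := double g) (x := y / 3)
    rw [ht, add_comm, iterate_add_apply, iterate_one, iterate_mul,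
      iterate_apply_eq_of_semiconjOn hg hconj hy,
      double_of_le (by linarith [(hg.iterate t hy).2])] at h
    linarith [(hg.iterate t hy).1, hy.2]

theorem two_mul_dist_le_dist_double (hg0 : g 0 ≤ 1) :
    ∀ u ∈ Icc (1 / 3 : ℝ) (2 / 3), ∀ v ∈ Icc (1 / 3 : ℝ) (2 / 3),
      2 * dist u v ≤ dist (double g u) (double g v) := by
  intro u hu v hv
  rw [double_of_mem_Icc hu, double_of_mem_Icc hv, Real.dist_eq, Real.dist_eq,
    add_sub_add_left_eq_sub, ← mul_sub, sub_sub_sub_cancel_right, abs_mul,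
    abs_of_neg (by linarith : g 0 - 3 < 0)]
  exact mul_le_mul_of_nonneg_right (by linarith) (abs_nonneg _)

theorem mapsTo_double_outer (hg : MapsTo g I I) :
    MapsTo (double g) (Icc 0 (1 / 3) ∪ Icc (2 / 3) 1) (Icc 0 (1 / 3) ∪ Icc (2 / 3) 1) :=
  union_comm (Icc (0 : ℝ) (1 / 3)) _ ▸ mapsTo_double_left.union_union (mapsTo_double_right hg)

theorem mapsTo_double_middle (hg : MapsTo g I I) :
    MapsTo (double g) (Icc (1 / 3) (2 / 3))
      (Icc (1 / 3) (2 / 3) ∪ (Icc 0 (1 / 3) ∪ Icc (2 / 3) 1)) := fun z hz ↦ by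
  have : double g z ∈ I := mapsTo_double hg ⟨by linarith [hz.1], by linarith [hz.2]⟩
  rcases le_or_gt (double g z) (1 / 3) with h | h
  · exact .inr (.inl ⟨this.1, h⟩)
  rcases le_or_gt (double g z) (2 / 3) with h' | h'
  · exact .inl ⟨h.le, h'⟩
  · exact .inr (.inr ⟨h'.le, this.2⟩)

theorem mem_image_div_three_of_mem_periodicPts_double (hg : MapsTo g I I)
    (hx : x ∈ Icc (0 : ℝ) (1 / 3)) (hxper : x ∈ Function.periodicPts (double g)) :
    x ∈ (· / 3) '' periodicPts g I := by
  have h3x : 3 * x ∈ I := ⟨by linarith [hx.1], by linarith [hx.2]⟩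
  refine ⟨3 * x, mem_periodicPts_iff.2 ⟨h3x, ?_⟩, by ring⟩
  have hmp := minimalPeriod_double_div_three hg h3x
  rw [mul_div_cancel_left₀ x three_ne_zero] at hmp
  rw [← minimalPeriod_pos_iff_mem_periodicPts] at hxper ⊢
  omega

theorem periodicPts_double_subset (hg : MapsTo g I I) :
    periodicPts (double g) I ⊆ (Icc (1 / 3) (2 / 3) ∩ fixedPoints (double g)) ∪
      ((· / 3) '' periodicPts g I ∪ double g '' ((· / 3) '' periodicPts g I)) := by
  rintro x ⟨hxI, hx⟩
  rcases le_or_gt x (1 / 3) with h1 | h1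
  · exact .inr (.inl (mem_image_div_three_of_mem_periodicPts_double hg ⟨hxI.1, h1⟩ hx))
  rcases lt_or_ge x (2 / 3) with h2 | h2
  · have horb := iterate_mem_of_mapsTo_union (mapsTo_double_middle hg) (mapsTo_double_outer hg)
      hx ⟨h1.le, h2.le⟩ (by rintro (h | h) <;> linarith [h.1, h.2])
    exact .inl ⟨⟨h1.le, h2.le⟩, isFixedPt_of_mem_periodicPts_of_expanding one_lt_two
      (two_mul_dist_le_dist_double (hg unitInterval.zero_mem).2) horb hx⟩
  -- `x` is the image of the point `w` preceding it on its cycle, and `w` lies in `[0, 1/3]`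
  · set m := minimalPeriod (double g) x
    have hm : 0 < m := minimalPeriod_pos_of_mem_periodicPts hx
    set w := (double g)^[m - 1] x
    have hw : double g w = x := by
      rw [← iterate_succ_apply' (double g), Nat.succ_eq_add_one, Nat.sub_add_cancel hm,
        iterate_minimalPeriod]
    have hwper : w ∈ Function.periodicPts (double g) :=
      ⟨m, hm, (isPeriodicPt_minimalPeriod _ x).apply_iterate _⟩
    rcases (mapsTo_double_outer hg).iterate (m - 1) (.inr ⟨h2, hxI.2⟩) with hwA | hwB
    · exact .inr (.inr ⟨w, mem_image_div_three_of_mem_periodicPts_double hg hwA hwper, hw⟩)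
    · linarith [(mapsTo_double_right hg hwB).2]

theorem finite_periodicPts_double (hg : MapsTo g I I) (hfin : (periodicPts g I).Finite) :
    (periodicPts (double g) I).Finite :=
  ((subsingleton_fixedPoints_of_expanding one_lt_two
      (two_mul_dist_le_dist_double (hg unitInterval.zero_mem).2)).finite.union
    ((hfin.image _).union ((hfin.image _).image _))).subset (periodicPts_double_subset hg)

theorem periodSet_double_subset (hg : MapsTo g I I) :
    periodSet (double g) I ⊆ insert 1 ((2 * ·) '' periodSet g I) := by
  rw [periodSet_eq_image, periodSet_eq_image]
  rintro _ ⟨x, hx, rfl⟩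
  rcases periodicPts_double_subset hg hx with
    ⟨-, hfix⟩ | ⟨y, hy, rfl⟩ | ⟨_, ⟨y, hy, rfl⟩, rfl⟩
  · exact .inl (minimalPeriod_eq_one_iff_isFixedPt.2 hfix)
  · exact .inr ⟨_, ⟨y, hy, rfl⟩, (minimalPeriod_double_div_three hg hy.1).symm⟩
  · have hyper : y / 3 ∈ Function.periodicPts (double g) := by
      rw [← minimalPeriod_pos_iff_mem_periodicPts, minimalPeriod_double_div_three hg hy.1]
      exact Nat.mul_pos two_pos (minimalPeriod_pos_of_mem_periodicPts hy.2)
    rw [minimalPeriod_apply hyper]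
    exact .inr ⟨_, ⟨y, hy, rfl⟩, (minimalPeriod_double_div_three hg hy.1).symm⟩

end Double

def cascade (n : ℕ) : ℝ → ℝ := double^[n] fun _ ↦ 0

theorem cascade_succ (n : ℕ) : cascade (n + 1) = double (cascade n) :=
  iterate_succ_apply' _ _ _

theorem continuous_cascade (n : ℕ) : Continuous (cascade n) := by
  induction n with
  | zero => exact continuous_const
  | succ n ih => rw [cascade_succ]; exact continuous_double ih

theorem mapsTo_cascade (n : ℕ) : MapsTo (cascade n) I I := by
  induction n with
  | zero => exact fun _ _ ↦ unitInterval.zero_mem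
  | succ n ih => rw [cascade_succ]; exact mapsTo_double ih

theorem periodicPts_cascade_zero_subset : periodicPts (cascade 0) I ⊆ {0} := by
  rintro x ⟨-, n, hn, hx⟩
  obtain ⟨k, rfl⟩ := Nat.exists_eq_add_of_lt hn
  rw [iterate_succ_apply'] at hx
  exact hx.symm

theorem finite_periodicPts_cascade (n : ℕ) : (periodicPts (cascade n) I).Finite := by
  induction n with
  | zero => exact (finite_singleton 0).subset periodicPts_cascade_zero_subset
  | succ n ih => rw [cascade_succ]; exact finite_periodicPts_double (mapsTo_cascade n) ih

theorem minimalPeriod_cascade_zero (n : ℕ) : minimalPeriod (cascade n) 0 = 2 ^ n := by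
  induction n with
  | zero => exact minimalPeriod_eq_one_iff_isFixedPt.2 rfl
  | succ n ih =>
    have h := minimalPeriod_double_div_three (mapsTo_cascade n) unitInterval.zero_mem
    rw [zero_div] at h
    rw [cascade_succ, h, ih, pow_succ, mul_comm]

theorem periodSet_cascade_subset (n : ℕ) :
    periodSet (cascade n) I ⊆ {m | ∃ k : ℕ, m = 2 ^ k} := by
  induction n with
  | zero =>
    rw [periodSet_eq_image]
    rintro _ ⟨x, hx, rfl⟩
    rw [periodicPts_cascade_zero_subset hx, minimalPeriod_cascade_zero]
    exact ⟨0, rfl⟩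
  | succ n ih =>
    rw [cascade_succ]
    refine (periodSet_double_subset (mapsTo_cascade n)).trans ?_
    rintro _ (rfl | ⟨_, hm, rfl⟩)
    · exact ⟨0, rfl⟩
    · obtain ⟨k, rfl⟩ := ih hm
      exact ⟨k + 1, by ring⟩

/-- `g` conjugated into the middle third by `y ↦ (1 + y) / 3`, joined linearly to the fixed points
`0` and `1`; the outer branches have slopes `1 + g 0` and `2 - g 1`. -/
def padFixingEnds (g : ℝ → ℝ) (x : ℝ) : ℝ :=
  if x ≤ 1 / 3 then (1 + g 0) * x
  else if x ≤ 2 / 3 then (1 + g (3 * x - 1)) / 3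
  else 1 + (2 - g 1) * (x - 1)

section Pad

variable {g : ℝ → ℝ} {x y : ℝ}

theorem padFixingEnds_of_le (hx : x ≤ 1 / 3) : padFixingEnds g x = (1 + g 0) * x := if_pos hx

theorem padFixingEnds_of_mem_Icc (hx : x ∈ Icc (1 / 3 : ℝ) (2 / 3)) :
    padFixingEnds g x = (1 + g (3 * x - 1)) / 3 := by
  rcases hx.1.eq_or_lt with rfl | h
  · rw [padFixingEnds_of_le le_rfl]; norm_num; ring
  · rw [padFixingEnds, if_neg h.not_ge, if_pos hx.2]

theorem padFixingEnds_of_ge (hx : 2 / 3 ≤ x) : padFixingEnds g x = 1 + (2 - g 1) * (x - 1) := by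
  rcases hx.eq_or_lt with rfl | h
  · rw [padFixingEnds_of_mem_Icc ⟨by norm_num, le_rfl⟩]; norm_num; ring
  · rw [padFixingEnds, if_neg (by linarith), if_neg h.not_ge]

theorem padFixingEnds_zero : padFixingEnds g 0 = 0 := by
  rw [padFixingEnds_of_le (by norm_num), mul_zero]

theorem padFixingEnds_one : padFixingEnds g 1 = 1 := by
  rw [padFixingEnds_of_ge (by norm_num), sub_self, mul_zero, add_zero]

theorem padFixingEnds_one_add_div_three (hy : y ∈ I) :
    padFixingEnds g ((1 + y) / 3) = (1 + g y) / 3 := by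
  rw [padFixingEnds_of_mem_Icc ⟨by linarith [hy.1], by linarith [hy.2]⟩]
  ring_nf

theorem continuous_padFixingEnds (hg : Continuous g) : Continuous (padFixingEnds g) := by
  refine Continuous.if_le (by fun_prop) (Continuous.if_le (by fun_prop) (by fun_prop)
    continuous_id continuous_const fun x hx ↦ ?_) continuous_id continuous_const fun x hx ↦ ?_
  · subst hx; norm_num; ring
  · subst hx; norm_num; ring

theorem mapsTo_padFixingEnds_middle (hg : MapsTo g I I) :
    MapsTo (padFixingEnds g) (Icc (1 / 3) (2 / 3)) (Icc (1 / 3) (2 / 3)) := fun x hx ↦ by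
  have : g (3 * x - 1) ∈ I := hg ⟨by linarith [hx.1], by linarith [hx.2]⟩
  rw [padFixingEnds_of_mem_Icc hx]
  constructor <;> linarith [this.1, this.2]

theorem mapsTo_padFixingEnds_left (hg : MapsTo g I I) :
    MapsTo (padFixingEnds g) (Icc 0 (1 / 3)) (Icc 0 (1 / 3) ∪ Icc (1 / 3) (2 / 3)) :=
  fun x hx ↦ by
  have := hg unitInterval.zero_mem
  rw [padFixingEnds_of_le hx.2]
  rcases le_or_gt ((1 + g 0) * x) (1 / 3) with h | h
  · exact .inl ⟨by nlinarith [hx.1, this.1], h⟩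
  · exact .inr ⟨h.le, by nlinarith [hx.1, hx.2, this.1, this.2]⟩

theorem mapsTo_padFixingEnds_right (hg : MapsTo g I I) :
    MapsTo (padFixingEnds g) (Icc (2 / 3) 1) (Icc (2 / 3) 1 ∪ Icc (1 / 3) (2 / 3)) :=
  fun x hx ↦ by
  have := hg unitInterval.one_mem
  rw [padFixingEnds_of_ge hx.1]
  rcases le_or_gt (2 / 3) (1 + (2 - g 1) * (x - 1)) with h | h
  · exact .inl ⟨h, by nlinarith [hx.1, hx.2, this.1, this.2]⟩
  · exact .inr ⟨by nlinarith [hx.1, hx.2, this.1, this.2], h.le⟩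

theorem mapsTo_padFixingEnds (hg : MapsTo g I I) : MapsTo (padFixingEnds g) I I := by
  intro x hx
  have hI : ∀ {a b : ℝ}, 0 ≤ a → b ≤ 1 → Icc a b ⊆ I := Icc_subset_Icc
  rcases le_or_gt x (1 / 3) with h1 | h1
  · rcases mapsTo_padFixingEnds_left hg ⟨hx.1, h1⟩ with h | h
    exacts [hI le_rfl (by norm_num) h, hI (by norm_num) (by norm_num) h]
  rcases le_or_gt x (2 / 3) with h2 | h2
  · exact hI (by norm_num) (by norm_num) (mapsTo_padFixingEnds_middle hg ⟨h1.le, h2⟩)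
  · rcases mapsTo_padFixingEnds_right hg ⟨h2.le, hx.2⟩ with h | h
    exacts [hI (by norm_num) le_rfl h, hI (by norm_num) (by norm_num) h]

theorem minimalPeriod_padFixingEnds (hg : MapsTo g I I) (hy : y ∈ I) :
    minimalPeriod (padFixingEnds g) ((1 + y) / 3) = minimalPeriod g y :=
  minimalPeriod_eq_of_semiconjOn (e := fun y ↦ (1 + y) / 3)
    (fun _ _ h ↦ add_left_cancel ((div_left_inj' three_ne_zero).1 h)) hg
    (fun _ hy ↦ padFixingEnds_one_add_div_three hy) hy

theorem dist_padFixingEnds_of_le {u v : ℝ} (hu : u ≤ 1 / 3) (hv : v ≤ 1 / 3) :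
    dist (padFixingEnds g u) (padFixingEnds g v) = |1 + g 0| * dist u v := by
  rw [padFixingEnds_of_le hu, padFixingEnds_of_le hv, Real.dist_eq, Real.dist_eq, ← mul_sub,
    abs_mul]

theorem dist_padFixingEnds_of_ge {u v : ℝ} (hu : 2 / 3 ≤ u) (hv : 2 / 3 ≤ v) :
    dist (padFixingEnds g u) (padFixingEnds g v) = |2 - g 1| * dist u v := by
  rw [padFixingEnds_of_ge hu, padFixingEnds_of_ge hv, Real.dist_eq, Real.dist_eq,
    add_sub_add_left_eq_sub, ← mul_sub, sub_sub_sub_cancel_right, abs_mul]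

theorem eq_zero_of_mem_periodicPts_padFixingEnds (hg : MapsTo g I I) (h0 : 0 < g 0)
    (hx : x ∈ Function.periodicPts (padFixingEnds g)) (hx0 : 0 ≤ x) (hx1 : x < 1 / 3) :
    x = 0 := by
  have horb := iterate_mem_of_mapsTo_union (mapsTo_padFixingEnds_left hg)
    (mapsTo_padFixingEnds_middle hg) hx ⟨hx0, hx1.le⟩ fun h ↦ hx1.not_ge h.1
  have hfix : (1 + g 0) * x = x := padFixingEnds_of_le hx1.le ▸
    isFixedPt_of_mem_periodicPts_of_expanding (c := 1 + g 0) (by linarith) (fun u hu v hv ↦ by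
      rw [dist_padFixingEnds_of_le hu.2 hv.2, abs_of_pos (by linarith)]) horb hx
  have hx0 : g 0 * x = 0 := by linarith
  exact (mul_eq_zero.1 hx0).resolve_left h0.ne'

theorem eq_one_of_mem_periodicPts_padFixingEnds (hg : MapsTo g I I) (h1 : g 1 < 1)
    (hx : x ∈ Function.periodicPts (padFixingEnds g)) (hx0 : 2 / 3 < x) (hx1 : x ≤ 1) :
    x = 1 := by
  have horb := iterate_mem_of_mapsTo_union (mapsTo_padFixingEnds_right hg)
    (mapsTo_padFixingEnds_middle hg) hx ⟨hx0.le, hx1⟩ fun h ↦ hx0.not_ge h.2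
  have hfix : 1 + (2 - g 1) * (x - 1) = x := padFixingEnds_of_ge hx0.le ▸
    isFixedPt_of_mem_periodicPts_of_expanding (c := 2 - g 1) (by linarith) (fun u hu v hv ↦ by
      rw [dist_padFixingEnds_of_ge hu.1 hv.1, abs_of_pos (by linarith)]) horb hx
  have hx1 : (1 - g 1) * (x - 1) = 0 := by linarith
  exact sub_eq_zero.1 ((mul_eq_zero.1 hx1).resolve_left (by linarith))

theorem periodicPts_padFixingEnds_subset (hg : MapsTo g I I) (h0 : 0 < g 0) (h1 : g 1 < 1) :
    periodicPts (padFixingEnds g) I ⊆ {0, 1} ∪ (fun y ↦ (1 + y) / 3) '' periodicPts g I := by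
  rintro x ⟨hxI, hx⟩
  by_cases hxM : x ∈ Icc (1 / 3 : ℝ) (2 / 3)
  · have hy : 3 * x - 1 ∈ I := ⟨by linarith [hxM.1], by linarith [hxM.2]⟩
    have hmp := minimalPeriod_padFixingEnds hg hy
    rw [show (1 + (3 * x - 1)) / 3 = x by ring] at hmp
    refine .inr ⟨3 * x - 1, mem_periodicPts_iff.2 ⟨hy, ?_⟩, by ring⟩
    rw [← minimalPeriod_pos_iff_mem_periodicPts, ← hmp]
    exact minimalPeriod_pos_of_mem_periodicPts hx
  rcases le_or_gt x (1 / 3) with hL | hR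
  · exact .inl (.inl (eq_zero_of_mem_periodicPts_padFixingEnds hg h0 hx hxI.1
      (hL.lt_of_ne fun h ↦ hxM ⟨h.ge, by linarith⟩)))
  · exact .inl (.inr (eq_one_of_mem_periodicPts_padFixingEnds hg h1 hx
      (lt_of_not_ge fun h ↦ hxM ⟨hR.le, h⟩) hxI.2))

theorem finite_periodicPts_padFixingEnds (hg : MapsTo g I I) (h0 : 0 < g 0) (h1 : g 1 < 1)
    (hfin : (periodicPts g I).Finite) : (periodicPts (padFixingEnds g) I).Finite :=
  ((toFinite {0, 1}).union (hfin.image _)).subset (periodicPts_padFixingEnds_subset hg h0 h1)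

theorem periodSet_padFixingEnds_subset (hg : MapsTo g I I) (h0 : 0 < g 0) (h1 : g 1 < 1) :
    periodSet (padFixingEnds g) I ⊆ insert 1 (periodSet g I) := by
  rw [periodSet_eq_image, periodSet_eq_image]
  rintro _ ⟨x, hx, rfl⟩
  rcases periodicPts_padFixingEnds_subset hg h0 h1 hx with (rfl | rfl) | ⟨y, hy, rfl⟩
  · exact .inl (minimalPeriod_eq_one_iff_isFixedPt.2 padFixingEnds_zero)
  · exact .inl (minimalPeriod_eq_one_iff_isFixedPt.2 padFixingEnds_one)
  · exact .inr ⟨y, hy, (minimalPeriod_padFixingEnds hg hy.1).symm⟩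

end Pad

def blockModel (n : ℕ) : ℝ → ℝ := padFixingEnds (cascade (n + 1))

section BlockModel

variable (n : ℕ)

theorem cascade_succ_zero_pos : 0 < cascade (n + 1) 0 := by
  rw [cascade_succ, double_of_le (by norm_num)]; norm_num

theorem cascade_succ_one_lt : cascade (n + 1) 1 < 1 := by
  have h : cascade n 1 ∈ I := mapsTo_cascade n unitInterval.one_mem
  rw [cascade_succ, double_of_ge (by norm_num)]
  norm_num
  linarith [h.2]

theorem continuous_blockModel : Continuous (blockModel n) :=
  continuous_padFixingEnds (continuous_cascade _)

theorem mapsTo_blockModel : MapsTo (blockModel n) I I :=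
  mapsTo_padFixingEnds (mapsTo_cascade _)

theorem finite_periodicPts_blockModel : (periodicPts (blockModel n) I).Finite :=
  finite_periodicPts_padFixingEnds (mapsTo_cascade _) (cascade_succ_zero_pos n)
    (cascade_succ_one_lt n) (finite_periodicPts_cascade _)

theorem periodSet_blockModel_subset :
    periodSet (blockModel n) I ⊆ {m | ∃ k : ℕ, m = 2 ^ k} :=
  (periodSet_padFixingEnds_subset (mapsTo_cascade _) (cascade_succ_zero_pos n)
    (cascade_succ_one_lt n)).trans (insert_subset ⟨0, rfl⟩ (periodSet_cascade_subset _))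

theorem blockModel_zero : blockModel n 0 = 0 := padFixingEnds_zero

theorem blockModel_one : blockModel n 1 = 1 := padFixingEnds_one

theorem minimalPeriod_blockModel_one_third :
    minimalPeriod (blockModel n) (1 / 3) = 2 ^ (n + 1) := by
  have h := minimalPeriod_padFixingEnds (mapsTo_cascade (n + 1)) unitInterval.zero_mem
  rw [add_zero, minimalPeriod_cascade_zero] at h
  exact h

end BlockModel

def blockEmbed (n : ℕ) (y : ℝ) : ℝ := (1 + y) / 2 ^ (n + 1)

def blockMap (n : ℕ) (x : ℝ) : ℝ := blockEmbed n (blockModel n (2 ^ (n + 1) * x - 1))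

theorem exists_one_div_two_pow_lt {x : ℝ} (hx : 0 < x) : ∃ n : ℕ, 1 / 2 ^ (n + 1) < x := by
  obtain ⟨n, hn⟩ := exists_pow_lt_of_lt_one hx (by norm_num : (1 / 2 : ℝ) < 1)
  refine ⟨n, lt_of_le_of_lt ?_ hn⟩
  rw [← one_div_pow]
  exact pow_le_pow_of_le_one (by norm_num) (by norm_num) n.le_succ

/-- `Nat.find` picks the block `(1/2^(n+1), 1/2^n]` containing `x`, on which the map is
`blockModel n` transported by `blockEmbed n`. -/
def cascadeMap (x : ℝ) : ℝ :=
  if hx : 0 < x then blockMap (Nat.find (exists_one_div_two_pow_lt hx)) x else 0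

section Blocks

variable {n : ℕ} {x y : ℝ}

theorem blockEmbed_injective (n : ℕ) : Injective (blockEmbed n) := fun _ _ h ↦
  add_left_cancel ((div_left_inj' (pow_ne_zero _ two_ne_zero)).1 h)

theorem one_div_two_pow_le_blockEmbed (hy : 0 ≤ y) : 1 / 2 ^ (n + 1) ≤ blockEmbed n y :=
  div_le_div_of_nonneg_right (by linarith) (by positivity)

theorem one_div_two_pow_lt_blockEmbed (hy : 0 < y) : 1 / 2 ^ (n + 1) < blockEmbed n y :=
  div_lt_div_of_pos_right (by linarith) (by positivity)

theorem blockEmbed_le_one_div_two_pow (hy : y ≤ 1) : blockEmbed n y ≤ 1 / 2 ^ n := by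
  rw [blockEmbed, pow_succ, div_le_div_iff₀ (by positivity) (by positivity)]
  nlinarith [pow_pos (two_pos : (0 : ℝ) < 2) n]

theorem blockEmbed_zero (n : ℕ) : blockEmbed n 0 = blockEmbed (n + 1) 1 := by
  rw [blockEmbed, blockEmbed, pow_succ 2 (n + 1)]; ring

theorem blockMap_blockEmbed (n : ℕ) (y : ℝ) :
    blockMap n (blockEmbed n y) = blockEmbed n (blockModel n y) := by
  have h : 2 ^ (n + 1) * blockEmbed n y - 1 = y := by
    rw [blockEmbed, mul_div_cancel₀ _ (by positivity), add_sub_cancel_left]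
  rw [blockMap, h]

theorem blockEmbed_mem (hy : y ∈ I) : blockEmbed n y ∈ I := by
  refine ⟨div_nonneg (by linarith [hy.1]) (by positivity), ?_⟩
  rw [blockEmbed, div_le_one (by positivity)]
  have h2 : (2 : ℝ) ≤ 2 ^ (n + 1) := le_self_pow₀ one_le_two (Nat.succ_ne_zero n)
  linarith [hy.2]

theorem blockEmbed_two_pow_mul_sub_one : blockEmbed n (2 ^ (n + 1) * x - 1) = x := by
  rw [blockEmbed, add_sub_cancel, mul_div_cancel_left₀ _ (by positivity)]

theorem two_pow_mul_sub_one_mem (hx : x ∈ Icc (1 / 2 ^ (n + 1)) (1 / 2 ^ n)) :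
    2 ^ (n + 1) * x - 1 ∈ I := by
  have h1 := (div_le_iff₀ (by positivity)).1 hx.1
  have h2 := (le_div_iff₀ (by positivity)).1 hx.2
  rw [pow_succ] at h1 ⊢
  constructor <;> nlinarith

theorem cascadeMap_blockEmbed_of_pos (hy : y ∈ Ioc 0 1) :
    cascadeMap (blockEmbed n y) = blockEmbed n (blockModel n y) := by
  have hpos : 0 < blockEmbed n y :=
    (one_div_pos.2 (by positivity)).trans (one_div_two_pow_lt_blockEmbed hy.1)
  have hfind : Nat.find (exists_one_div_two_pow_lt hpos) = n := by
    rw [Nat.find_eq_iff]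
    refine ⟨one_div_two_pow_lt_blockEmbed hy.1, fun m hm ↦ not_lt.2 ?_⟩
    exact (blockEmbed_le_one_div_two_pow hy.2).trans
      (one_div_pow_le_one_div_pow_of_le one_le_two hm)
  rw [cascadeMap, dif_pos hpos, hfind, blockMap_blockEmbed]

theorem cascadeMap_blockEmbed (hy : y ∈ I) :
    cascadeMap (blockEmbed n y) = blockEmbed n (blockModel n y) := by
  rcases hy.1.eq_or_lt with rfl | hy0
  · rw [blockEmbed_zero, cascadeMap_blockEmbed_of_pos ⟨one_pos, le_rfl⟩, blockModel_one,
      blockModel_zero, blockEmbed_zero]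
  · exact cascadeMap_blockEmbed_of_pos ⟨hy0, hy.2⟩

theorem exists_blockEmbed_eq (hx : x ∈ Ioc 0 1) : ∃ n, ∃ y ∈ I, blockEmbed n y = x := by
  have hspec := Nat.find_spec (exists_one_div_two_pow_lt hx.1)
  have hmin := fun m ↦ Nat.find_min (m := m) (exists_one_div_two_pow_lt hx.1)
  generalize Nat.find (exists_one_div_two_pow_lt hx.1) = n at hspec hmin
  have hle : x ≤ 1 / 2 ^ n := by
    cases n with
    | zero => rw [pow_zero, div_one]; exact hx.2
    | succ m => exact not_lt.1 (hmin m m.lt_succ_self)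
  exact ⟨n, _, two_pow_mul_sub_one_mem ⟨hspec.le, hle⟩, blockEmbed_two_pow_mul_sub_one⟩

theorem cascadeMap_zero : cascadeMap 0 = 0 := dif_neg (lt_irrefl 0)

theorem minimalPeriod_cascadeMap_blockEmbed (hy : y ∈ I) :
    minimalPeriod cascadeMap (blockEmbed n y) = minimalPeriod (blockModel n) y :=
  minimalPeriod_eq_of_semiconjOn (blockEmbed_injective n) (mapsTo_blockModel n)
    (fun _ hy ↦ cascadeMap_blockEmbed hy) hy

theorem mapsTo_cascadeMap : MapsTo cascadeMap I I := by
  intro x hx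
  rcases hx.1.eq_or_lt with rfl | hpos
  · rw [cascadeMap_zero]; exact unitInterval.zero_mem
  obtain ⟨n, y, hy, rfl⟩ := exists_blockEmbed_eq ⟨hpos, hx.2⟩
  rw [cascadeMap_blockEmbed hy]
  exact blockEmbed_mem (mapsTo_blockModel n hy)

theorem cascadeMap_le_two_mul (hx : x ∈ I) : cascadeMap x ≤ 2 * x := by
  rcases hx.1.eq_or_lt with rfl | hpos
  · rw [cascadeMap_zero, mul_zero]
  obtain ⟨n, y, hy, rfl⟩ := exists_blockEmbed_eq ⟨hpos, hx.2⟩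
  rw [cascadeMap_blockEmbed hy]
  calc blockEmbed n (blockModel n y) ≤ 1 / 2 ^ n :=
        blockEmbed_le_one_div_two_pow (mapsTo_blockModel n hy).2
    _ = 2 * (1 / 2 ^ (n + 1)) := by rw [pow_succ]; field_simp
    _ ≤ 2 * blockEmbed n y := by gcongr; exact one_div_two_pow_le_blockEmbed hy.1

theorem continuous_blockMap (n : ℕ) : Continuous (blockMap n) := by
  have := continuous_blockModel n
  unfold blockMap blockEmbed
  fun_prop

theorem eqOn_cascadeMap_blockMap (n : ℕ) :
    EqOn cascadeMap (blockMap n) (Icc (1 / 2 ^ (n + 1)) (1 / 2 ^ n)) := fun x hx ↦ by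
  rw [← blockEmbed_two_pow_mul_sub_one (n := n) (x := x),
    cascadeMap_blockEmbed (two_pow_mul_sub_one_mem hx), blockMap_blockEmbed]

theorem continuousOn_cascadeMap_Icc (n : ℕ) :
    ContinuousOn cascadeMap (Icc (1 / 2 ^ (n + 1)) 1) := by
  induction n with
  | zero => simpa using (continuous_blockMap 0).continuousOn.congr (eqOn_cascadeMap_blockMap 0)
  | succ n ih =>
    rw [← Icc_union_Icc_eq_Icc (b := 1 / 2 ^ (n + 1))
      (one_div_pow_le_one_div_pow_of_le one_le_two (by omega))
      (div_le_one_of_le₀ (one_le_pow₀ one_le_two) (by positivity))]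
    exact ((continuous_blockMap _).continuousOn.congr
      (eqOn_cascadeMap_blockMap _)).union_of_isClosed ih isClosed_Icc isClosed_Icc

theorem continuousOn_cascadeMap : ContinuousOn cascadeMap I := by
  intro x hx
  rcases hx.1.eq_or_lt with rfl | hpos
  · have h2 : Tendsto (fun x : ℝ ↦ 2 * x) (𝓝[I] 0) (𝓝 0) :=
      ((continuous_const_mul 2).tendsto' 0 0 (mul_zero 2)).mono_left nhdsWithin_le_nhds
    rw [ContinuousWithinAt, cascadeMap_zero]
    exact tendsto_of_tendsto_of_tendsto_of_le_of_le' tendsto_const_nhds h2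
      (eventually_nhdsWithin_of_forall fun x hx ↦ (mapsTo_cascadeMap hx).1)
      (eventually_nhdsWithin_of_forall fun x hx ↦ cascadeMap_le_two_mul hx)
  obtain ⟨n, hn⟩ := exists_one_div_two_pow_lt hpos
  exact (continuousOn_cascadeMap_Icc n x ⟨hn.le, hx.2⟩).mono_of_mem_nhdsWithin
    (mem_nhdsWithin.2 ⟨Ioi _, isOpen_Ioi, hn, fun z hz ↦ ⟨le_of_lt hz.1, hz.2.2⟩⟩)

theorem periodSet_cascadeMap : periodSet cascadeMap I = {m | ∃ k : ℕ, m = 2 ^ k} := by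
  apply Subset.antisymm
  · rw [periodSet_eq_image]
    rintro _ ⟨x, ⟨hxI, hx⟩, rfl⟩
    rcases hxI.1.eq_or_lt with rfl | hpos
    · exact ⟨0, minimalPeriod_eq_one_iff_isFixedPt.2 cascadeMap_zero⟩
    obtain ⟨n, y, hy, rfl⟩ := exists_blockEmbed_eq ⟨hpos, hxI.2⟩
    replace hx : blockEmbed n y ∈ Function.periodicPts cascadeMap := hx
    rw [← minimalPeriod_pos_iff_mem_periodicPts, minimalPeriod_cascadeMap_blockEmbed hy,
      minimalPeriod_pos_iff_mem_periodicPts] at hx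
    rw [minimalPeriod_cascadeMap_blockEmbed hy]
    exact periodSet_blockModel_subset n
      (by rw [periodSet_eq_image]; exact ⟨y, ⟨hy, hx⟩, rfl⟩)
  · rintro _ ⟨k, rfl⟩
    refine ⟨Nat.one_le_two_pow, ?_⟩
    cases k with
    | zero =>
      exact ⟨0, unitInterval.zero_mem, minimalPeriod_eq_one_iff_isFixedPt.2 cascadeMap_zero⟩
    | succ n =>
      have h : (1 / 3 : ℝ) ∈ I := ⟨by norm_num, by norm_num⟩
      exact ⟨blockEmbed n (1 / 3), blockEmbed_mem h, by
        rw [minimalPeriod_cascadeMap_blockEmbed h, minimalPeriod_blockModel_one_third]⟩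

theorem finite_periodicPts_cascadeMap_inter_Ioi (N : ℕ) :
    (periodicPts cascadeMap I ∩ Ioi (1 / 2 ^ N)).Finite := by
  refine ((finite_Iio N).biUnion fun n _ ↦
    (finite_periodicPts_blockModel n).image (blockEmbed n)).subset ?_
  rintro x ⟨⟨hxI, hx⟩, hxN⟩
  obtain ⟨n, y, hy, rfl⟩ :=
    exists_blockEmbed_eq ⟨(one_div_pos.2 (by positivity)).trans hxN, hxI.2⟩
  refine mem_iUnion₂.2 ⟨n, ?_, y, mem_periodicPts_iff.2 ⟨hy, ?_⟩, rfl⟩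
  · by_contra h
    exact not_le.2 hxN ((blockEmbed_le_one_div_two_pow hy.2).trans
      (one_div_pow_le_one_div_pow_of_le one_le_two (not_lt.1 h)))
  · rw [← minimalPeriod_pos_iff_mem_periodicPts, ← minimalPeriod_cascadeMap_blockEmbed hy]
    exact minimalPeriod_pos_of_mem_periodicPts hx

theorem not_accPt_periodicPts_cascadeMap (hx0 : x ≠ 0) :
    ¬AccPt x (𝓟 (periodicPts cascadeMap I)) := fun hacc ↦ by
  obtain ⟨U, hU, hfin⟩ : ∃ U ∈ 𝓝 x, (U ∩ periodicPts cascadeMap I).Finite := by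
    rcases lt_or_gt_of_ne hx0 with hneg | hpos
    · exact ⟨Iio 0, Iio_mem_nhds hneg,
        finite_empty.subset fun z hz ↦ absurd hz.2.1.1 (not_le.2 hz.1)⟩
    · obtain ⟨N, hN⟩ := exists_one_div_two_pow_lt hpos
      exact ⟨Ioi _, Ioi_mem_nhds hN,
        (finite_periodicPts_cascadeMap_inter_Ioi (N + 1)).subset (inter_comm _ _).subset⟩
  exact Set.Infinite.of_accPt (hacc.nhds_inter hU) hfin

theorem tendsto_blockEmbed_zero : Tendsto (fun n ↦ blockEmbed n 0) atTop (𝓝 0) := by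
  have h : (fun n ↦ blockEmbed n 0) = fun n ↦ (1 / 2 : ℝ) ^ (n + 1) := by
    funext n; rw [blockEmbed, add_zero, one_div_pow]
  rw [h]
  exact (tendsto_pow_atTop_nhds_zero_of_lt_one (by norm_num) (by norm_num)).comp
    (tendsto_add_atTop_nat 1)

theorem accPt_zero_periodicPts_cascadeMap : AccPt 0 (𝓟 (periodicPts cascadeMap I)) := by
  have hfix : ∀ n, blockEmbed n 0 ∈ periodicPts cascadeMap I := fun n ↦
    ⟨blockEmbed_mem unitInterval.zero_mem, 1, le_rfl,
      by rw [iterate_one, cascadeMap_blockEmbed unitInterval.zero_mem, blockModel_zero]⟩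
  have hne : ∀ n, blockEmbed n 0 ≠ 0 := fun n ↦
    ((one_div_pos.2 (by positivity)).trans_le (one_div_two_pow_le_blockEmbed le_rfl)).ne'
  exact accPt_iff_frequently.2
    (tendsto_blockEmbed_zero.frequently (Frequently.of_forall fun n ↦ ⟨hne n, hfix n⟩))

theorem accPts_periodicPts_cascadeMap :
    {x | AccPt x (𝓟 (periodicPts cascadeMap I))} = {0} := by
  ext x
  exact ⟨fun hacc ↦ by_contra fun hx0 ↦ not_accPt_periodicPts_cascadeMap hx0 hacc,
    fun (hx : x = 0) ↦ hx ▸ accPt_zero_periodicPts_cascadeMap⟩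

theorem zero_mem_periodicPts_cascadeMap : (0 : ℝ) ∈ periodicPts cascadeMap I :=
  ⟨unitInterval.zero_mem, 1, le_rfl, cascadeMap_zero⟩

end Blocks

end

/-- There is a continuous map of `[0,1]` whose set of periods is `{2^n : n ∈ ℕ}`
and whose set of accumulation points of periodic points is a single point, which is
moreover periodic.  Hence Lemma 1 fails without piecewise monotonicity. -/
theorem exists_continuous_map_periods_pow_two_acc_singleton_periodic :
    ∃ f : ℝ → ℝ, ContinuousOn f (Set.Icc (0:ℝ) 1) ∧
      Set.MapsTo f (Set.Icc (0:ℝ) 1) (Set.Icc (0:ℝ) 1) ∧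
      periodSet f (Set.Icc (0:ℝ) 1) = {n | ∃ k : ℕ, n = 2 ^ k} ∧
      ∃ x₀ : ℝ,
        {x | AccPt x (Filter.principal (periodicPts f (Set.Icc (0:ℝ) 1)))} = {x₀} ∧
        x₀ ∈ periodicPts f (Set.Icc (0:ℝ) 1) :=
  ⟨cascadeMap, continuousOn_cascadeMap, mapsTo_cascadeMap, periodSet_cascadeMap, 0,
    accPts_periodicPts_cascadeMap, zero_mem_periodicPts_cascadeMap⟩
end

section
/- Let K ⊆ I be compact, f : I → I continuous with f(K) ⊆ K, and h : K → {0,1}^ℕ a continuous surjection with h ∘ f = σ ∘ h (σ the adding machine) such that every fiber h^{-1}(s) contains at most two points. Suppose K decomposes into nested cyclic unions K = ⋃_{i=1}^{2^n} K_i^{(n)} permuted cyclically by f, with h respecting the corresponding cylinder decomposition of {0,1}^ℕ. Then for every s ∈ {0,1}^ℕ at least one point of h^{-1}(s) is recurrent under f. -/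
open Filter

open Topology

/-- The adding machine (binary odometer) on `{0,1}^ℕ`: add one with carry. -/
def addingMachine (x : ℕ → Fin 2) : ℕ → Fin 2 :=
  fun i => if ∀ j < i, x j = 1 then 1 - x i else x i

private lemma sum_range_two_pow (n : ℕ) : ∑ j ∈ Finset.range n, 2 ^ j = 2 ^ n - 1 := by
  induction n with
  | zero => simp
  | succ m ih =>
    have h1 : (1:ℕ) ≤ 2 ^ m := Nat.one_le_two_pow
    rw [Finset.sum_range_succ, ih, pow_succ]
    omega

/-- The number with binary digits `t 0, …, t (n-1)`. -/
private def binVal (n : ℕ) (t : ℕ → Fin 2) : ℕ := ∑ j ∈ Finset.range n, (t j).val * 2 ^ j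

private lemma binVal_lt (n : ℕ) (t : ℕ → Fin 2) : binVal n t < 2 ^ n := by
  induction n with
  | zero => simp [binVal]
  | succ n ih =>
    have h1 : (t n).val ≤ 1 := Fin.is_le (t n)
    have h2 : (t n).val * 2 ^ n ≤ 1 * 2 ^ n := Nat.mul_le_mul_right _ h1
    have e : binVal (n + 1) t = binVal n t + (t n).val * 2 ^ n := by
      simp [binVal, Finset.sum_range_succ]
    rw [e, pow_succ]
    omega

private lemma binVal_inj (n : ℕ) : ∀ t u : ℕ → Fin 2, binVal n t = binVal n u →
    ∀ j < n, t j = u j := by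
  induction n with
  | zero => intro t u _ j hj; omega
  | succ n ih =>
    intro t u hval j hj
    have e1 : binVal (n + 1) t = binVal n t + (t n).val * 2 ^ n := by
      simp [binVal, Finset.sum_range_succ]
    have e2 : binVal (n + 1) u = binVal n u + (u n).val * 2 ^ n := by
      simp [binVal, Finset.sum_range_succ]
    have l1 := binVal_lt n t
    have l2 := binVal_lt n u
    have b1 : (t n).val ≤ 1 := Fin.is_le _
    have b2 : (u n).val ≤ 1 := Fin.is_le _
    have hnn : (t n).val = (u n).val ∧ binVal n t = binVal n u := by
      rw [e1, e2] at hval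
      have b1' : (t n).val = 0 ∨ (t n).val = 1 := by omega
      have b2' : (u n).val = 0 ∨ (u n).val = 1 := by omega
      rcases b1' with h1 | h1 <;> rcases b2' with h2 | h2 <;>
        rw [h1, h2] at hval <;> simp at hval <;> omega
    rcases Nat.lt_or_ge j n with hjn | hjn
    · exact ih t u hnn.2 j hjn
    · have hje : j = n := by omega
      subst hje
      exact Fin.ext hnn.1

private lemma fin2_eq_zero_of_ne_one {x : Fin 2} (h : x ≠ 1) : x = 0 := by
  fin_cases x <;> simp_all

private lemma binVal_addingMachine (n : ℕ) (t : ℕ → Fin 2) :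
    binVal n (addingMachine t) = (binVal n t + 1) % 2 ^ n := by
  by_cases hall : ∀ j < n, t j = 1
  · have h1 : binVal n t = 2 ^ n - 1 := by
      have e : ∑ j ∈ Finset.range n, (t j).val * 2 ^ j = ∑ j ∈ Finset.range n, 2 ^ j :=
        Finset.sum_congr rfl fun j hj => by simp [hall j (Finset.mem_range.mp hj)]
      rw [binVal, e, sum_range_two_pow]
    have h2 : binVal n (addingMachine t) = 0 := by
      rw [binVal]
      apply Finset.sum_eq_zero
      intro j hj
      have hj' := Finset.mem_range.mp hj
      have hcond : ∀ j' < j, t j' = 1 := fun j' hj'' => hall j' (by omega)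
      have hA : addingMachine t j = 0 := by
        show (if ∀ j' < j, t j' = 1 then 1 - t j else t j) = 0
        simp only [if_pos hcond, hall j hj']
        decide
      simp [hA]
    have hp : (1:ℕ) ≤ 2 ^ n := Nat.one_le_two_pow
    rw [h1, h2, Nat.sub_add_cancel hp, Nat.mod_self]
  · push_neg at hall
    obtain ⟨j0, hj0n, hj0⟩ := hall
    have hex : ∃ j, t j ≠ 1 := ⟨j0, hj0⟩
    set c := Nat.find hex with hc
    have hcne : t c ≠ 1 := Nat.find_spec hex
    have hc0 : t c = 0 := fin2_eq_zero_of_ne_one hcne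
    have hcn : c < n := lt_of_le_of_lt (Nat.find_le hj0) hj0n
    have hbelow : ∀ j < c, t j = 1 := by
      intro j hj
      by_contra hne'
      have h1 : c ≤ j := hc ▸ Nat.find_le hne'
      omega
    have hAbelow : ∀ j < c, addingMachine t j = 0 := by
      intro j hj
      show (if ∀ j' < j, t j' = 1 then 1 - t j else t j) = 0
      simp only [if_pos (fun j' (hj' : j' < j) => hbelow j' (by omega)), hbelow j hj]
      decide
    have hAc : addingMachine t c = 1 := by
      show (if ∀ j' < c, t j' = 1 then 1 - t c else t c) = 1
      simp only [if_pos (fun j' (hj' : j' < c) => hbelow j' hj'), hc0]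
      decide
    have hAabove : ∀ j, c < j → addingMachine t j = t j := by
      intro j hj
      show (if ∀ j' < j, t j' = 1 then 1 - t j else t j) = t j
      rw [if_neg]
      intro hcontra
      exact hcne (hcontra c hj)
    have key : ∀ u : ℕ → Fin 2, binVal n u =
        (∑ j ∈ Finset.range (c+1), (u j).val * 2 ^ j) +
          ∑ j ∈ Finset.Ico (c+1) n, (u j).val * 2 ^ j := by
      intro u
      rw [binVal, Finset.range_eq_Ico,
        ← Finset.sum_Ico_consecutive _ (Nat.zero_le (c+1)) (by omega : c+1 ≤ n),
        ← Finset.range_eq_Ico]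
    have htail : ∑ j ∈ Finset.Ico (c+1) n, ((addingMachine t) j).val * 2 ^ j
        = ∑ j ∈ Finset.Ico (c+1) n, (t j).val * 2 ^ j :=
      Finset.sum_congr rfl fun j hj => by
        rw [hAabove j (by have := Finset.mem_Ico.mp hj; omega)]
    have hhead1 : ∑ j ∈ Finset.range (c+1), ((addingMachine t) j).val * 2 ^ j = 2 ^ c := by
      have e : ∑ j ∈ Finset.range c, ((addingMachine t) j).val * 2 ^ j = 0 :=
        Finset.sum_eq_zero fun j hj => by simp [hAbelow j (Finset.mem_range.mp hj)]
      rw [Finset.sum_range_succ, e, hAc]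
      simp
    have hhead2 : ∑ j ∈ Finset.range (c+1), (t j).val * 2 ^ j = 2 ^ c - 1 := by
      have e : ∑ j ∈ Finset.range c, (t j).val * 2 ^ j = ∑ j ∈ Finset.range c, 2 ^ j :=
        Finset.sum_congr rfl fun j hj => by simp [hbelow j (Finset.mem_range.mp hj)]
      rw [Finset.sum_range_succ, e, sum_range_two_pow, hc0]
      simp
    have hlt := binVal_lt n (addingMachine t)
    have heq : binVal n (addingMachine t) = binVal n t + 1 := by
      rw [key (addingMachine t), key t, htail, hhead1, hhead2]
      have h1 : (1:ℕ) ≤ 2 ^ c := Nat.one_le_two_pow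
      omega
    rw [heq, Nat.mod_eq_of_lt (heq ▸ hlt)]

private lemma binVal_iterate (n k : ℕ) (t : ℕ → Fin 2) :
    binVal n (addingMachine^[k] t) = (binVal n t + k) % 2 ^ n := by
  induction k with
  | zero => simp [Nat.mod_eq_of_lt (binVal_lt n t)]
  | succ k ih =>
    rw [Function.iterate_succ_apply', binVal_addingMachine, ih, Nat.mod_add_mod, Nat.add_assoc]

private lemma orbit_dense (t s : ℕ → Fin 2) (n : ℕ) :
    ∃ k, ∀ j < n, addingMachine^[k] t j = s j := by
  refine ⟨2 ^ n - binVal n t + binVal n s, ?_⟩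
  apply binVal_inj n
  rw [binVal_iterate]
  have h1 := binVal_lt n t
  have h2 := binVal_lt n s
  have e : binVal n t + (2 ^ n - binVal n t + binVal n s) = 2 ^ n + binVal n s := by omega
  rw [e, Nat.add_mod_left, Nat.mod_eq_of_lt h2]

/-- Minimality of the adding machine: any nonempty closed invariant set is everything. -/
private lemma addingMachine_minimal (T : Set (ℕ → Fin 2)) (hclosed : IsClosed T)
    (hne : T.Nonempty) (hinv : ∀ t ∈ T, addingMachine t ∈ T) :
    ∀ s, s ∈ T := by
  intro s
  obtain ⟨t, ht⟩ := hne
  have horb : ∀ k, addingMachine^[k] t ∈ T := by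
    intro k
    induction k with
    | zero => exact ht
    | succ k ih => rw [Function.iterate_succ_apply']; exact hinv _ ih
  choose k hk using fun n => orbit_dense t s n
  have htend : Tendsto (fun n => addingMachine^[k n] t) atTop (𝓝 s) := by
    rw [tendsto_pi_nhds]
    intro j
    apply Tendsto.congr' _ tendsto_const_nhds
    filter_upwards [eventually_gt_atTop j] with n hn
    exact (hk n j hn).symm
  exact hclosed.mem_of_tendsto htend (Eventually.of_forall fun n => horb (k n))

/-- If `h : K → {0,1}^ℕ` is a continuous surjective semiconjugacy from `f` to the
adding machine with fibers of at most two points, and `K` carries compatible nested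
cyclic decompositions into `2^n` pieces respected by `h`, then every fiber contains
a recurrent point of `f`. -/
theorem fiber_contains_recurrent_point
    (a b : ℝ) (f : ℝ → ℝ)
    (hf : ContinuousOn f (Set.Icc a b))
    (hmap : Set.MapsTo f (Set.Icc a b) (Set.Icc a b))
    (K : Set ℝ) (hK : IsCompact K) (hKI : K ⊆ Set.Icc a b) (hKinv : f '' K ⊆ K)
    (h : ℝ → (ℕ → Fin 2))
    (hcont : ContinuousOn h K)
    (hsurj : h '' K = Set.univ)
    (hsemi : ∀ x ∈ K, h (f x) = addingMachine (h x))
    (hfib : ∀ s : ℕ → Fin 2, Set.ncard {x ∈ K | h x = s} ≤ 2)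
    (A : ℕ → ℕ → Set ℝ)
    (hcover : ∀ n, K = ⋃ i ∈ Finset.range (2 ^ n), A n i)
    (hne : ∀ n, ∀ i < 2 ^ n, (A n i).Nonempty)
    (hcpt : ∀ n, ∀ i < 2 ^ n, IsCompact (A n i))
    (hcyc : ∀ n, ∀ i < 2 ^ n, f '' A n i ⊆ A n ((i + 1) % 2 ^ n))
    (hnest : ∀ n, ∀ i < 2 ^ (n + 1), A (n + 1) i ⊆ A n (i % 2 ^ n))
    (hcyl : ∀ n, ∀ i < 2 ^ n, ∀ x ∈ A n i, ∀ y ∈ A n i, ∀ j < n, h x j = h y j) :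
    ∀ s : ℕ → Fin 2, ∃ x ∈ K, h x = s ∧
      MapClusterPt x atTop (fun n : ℕ => f^[n] x) := by
  intro s
  -- K is nonempty
  have hKne : K.Nonempty := by
    have himne : (h '' K).Nonempty := by
      rw [hsurj]; exact ⟨fun _ => 0, trivial⟩
    exact himne.of_image
  -- the family of nonempty closed invariant subsets of K
  set S : Set (Set ℝ) := {T | T ⊆ K ∧ T.Nonempty ∧ IsClosed T ∧ ∀ x ∈ T, f x ∈ T} with hS
  have hKinS : K ∈ S := ⟨le_rfl, hKne, hK.isClosed, fun x hx => hKinv ⟨x, hx, rfl⟩⟩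
  -- Zorn's lemma: a minimal element of S
  have hzorn : ∃ M ⊆ K, Minimal (fun T => T ∈ S) M := by
    apply zorn_superset_nonempty S _ K hKinS
    intro c hcS hchain hcne
    refine ⟨⋂₀ c, ⟨?_, ?_, ?_, ?_⟩, fun T hT => Set.sInter_subset_of_mem hT⟩
    · obtain ⟨T, hT⟩ := hcne
      exact (Set.sInter_subset_of_mem hT).trans (hcS hT).1
    · have hcne' : Nonempty c := hcne.to_subtype
      rw [Set.sInter_eq_iInter]
      apply IsCompact.nonempty_iInter_of_directed_nonempty_isCompact_isClosed
      · intro T U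
        rcases hchain.total T.2 U.2 with hTU | hUT
        · exact ⟨T, le_rfl, hTU⟩
        · exact ⟨U, hUT, le_rfl⟩
      · exact fun T => (hcS T.2).2.1
      · exact fun T => hK.of_isClosed_subset (hcS T.2).2.2.1 (hcS T.2).1
      · exact fun T => (hcS T.2).2.2.1
    · exact isClosed_sInter fun T hT => (hcS hT).2.2.1
    · intro x hx
      rw [Set.mem_sInter] at hx ⊢
      intro T hT
      exact (hcS hT).2.2.2 x (hx T hT)
  obtain ⟨M, hMK, hMmin⟩ := hzorn
  obtain ⟨hMsubK, hMne, hMclosed, hMinv⟩ := hMmin.1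
  have hMcpt : IsCompact M := hK.of_isClosed_subset hMclosed hMsubK
  -- orbits stay in M
  have horbM : ∀ x ∈ M, ∀ k, f^[k] x ∈ M := by
    intro x hx k
    induction k with
    | zero => exact hx
    | succ k ih => rw [Function.iterate_succ_apply']; exact hMinv _ ih
  -- every point of M is recurrent
  have hrec : ∀ m ∈ M, MapClusterPt m atTop (fun n : ℕ => f^[n] m) := by
    intro m hm
    rw [mapClusterPt_iff_frequently]
    intro U hU
    rw [frequently_atTop]
    intro N
    -- the closure of the tail orbit is a nonempty closed invariant subset of M
    set O : Set ℝ := (fun k => f^[k] m) '' {k | N ≤ k} with hO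
    have hOM : O ⊆ M := by
      rintro _ ⟨k, _, rfl⟩
      exact horbM m hm k
    have hCM : closure O ⊆ M := hMclosed.closure_subset_iff.mpr hOM
    have hCinS : closure O ∈ S := by
      refine ⟨hCM.trans hMsubK, ⟨f^[N] m, subset_closure ⟨N, by simp, rfl⟩⟩,
        isClosed_closure, ?_⟩
      intro x hx
      rw [mem_closure_iff_seq_limit] at hx
      obtain ⟨u, huO, hulim⟩ := hx
      have hxM : x ∈ M := hCM (by rw [mem_closure_iff_seq_limit]; exact ⟨u, huO, hulim⟩)
      have hfx : Tendsto (fun i => f (u i)) atTop (𝓝 (f x)) := by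
        have hcw : ContinuousWithinAt f (Set.Icc a b) x := hf x (hKI (hMsubK hxM))
        exact hcw.tendsto.comp
          (tendsto_nhdsWithin_of_tendsto_nhds_of_eventually_within u hulim
            (Eventually.of_forall fun i => hKI (hMsubK (hOM (huO i)))))
      apply isClosed_closure.mem_of_tendsto hfx
      apply Eventually.of_forall
      intro i
      obtain ⟨k, hkN, hk⟩ := huO i
      have hk' : f^[k] m = u i := hk
      apply subset_closure
      refine ⟨k + 1, by simp at hkN ⊢; omega, ?_⟩
      show f^[k+1] m = f (u i)
      rw [← hk']
      exact Function.iterate_succ_apply' f k m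
    have hMC : M ⊆ closure O := hMmin.2 hCinS hCM
    have hmC : m ∈ closure O := hMC hm
    rw [mem_closure_iff] at hmC
    obtain ⟨y, hyU, hyO⟩ := hmC (interior U) isOpen_interior
      (mem_interior_iff_mem_nhds.mpr hU)
    obtain ⟨k, hkN, hk⟩ := hyO
    have hk' : f^[k] m = y := hk
    exact ⟨k, hkN, by rw [hk']; exact interior_subset hyU⟩
  -- h '' M is closed, nonempty and invariant under the adding machine, hence everything
  have hTclosed : IsClosed (h '' M) :=
    (hMcpt.image_of_continuousOn (hcont.mono hMsubK)).isClosed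
  have hTne : (h '' M).Nonempty := hMne.image h
  have hTinv : ∀ t ∈ h '' M, addingMachine t ∈ h '' M := by
    rintro _ ⟨x, hx, rfl⟩
    exact ⟨f x, hMinv x hx, hsemi x (hMsubK hx)⟩
  have hs : s ∈ h '' M := addingMachine_minimal _ hTclosed hTne hTinv s
  obtain ⟨m, hmM, hms⟩ := hs
  exact ⟨m, hMsubK hmM, hms, hrec m hmM⟩
end

section
/- Let f : I → I be continuous and x a point with f^l(x) > x and f^l strictly increasing on an interval V ∋ x with f^l(inf V) < q for some fixed point q of f^l with q < x and f^l(y) > y for all y ∈ (q, x). If moreover f^{2l}(x) < x and there is a point y ∈ (x, f^l(x)) with f^l(y) = q, then f has positive topological entropy. -/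
open Filter ENNReal

/-- The maximal cardinality of an `(n, ε)`-separated subset of `I` for `f`. -/
noncomputable def sepCard (f : ℝ → ℝ) (I : Set ℝ) (n : ℕ) (ε : ℝ) : ℝ≥0∞ :=
  sSup {c : ℝ≥0∞ | ∃ S : Finset ℝ, ↑S ⊆ I ∧ c = S.card ∧
    ∀ x ∈ S, ∀ y ∈ S, x ≠ y → ∃ m < n, ε < |f^[m] x - f^[m] y|}

/-- Topological entropy of `f` on `I` via `(n,ε)`-separated sets.  Since
`ε ↦ limsup_n (1/n) log H(f,n,ε)` is monotone as `ε` decreases, the limit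
as `ε → 0` equals the supremum over `ε > 0`. -/
noncomputable def topEntropy (f : ℝ → ℝ) (I : Set ℝ) : EReal :=
  ⨆ (ε : ℝ) (_ : 0 < ε),
    Filter.limsup (fun n : ℕ => ENNReal.log (sepCard f I n ε) / (n : EReal)) atTop

/-! Write `g = f^l`. An orbit of `g` starting in `(q, x)` increases, and it cannot converge,
since its limit would be a fixed point of `g` in `(q, x]`; so some `w ∈ (q, x)` has
`g^k w = x`. Pick `v ∈ [q, w]` and `u ∈ [x, y]` with `g v = g u = w`. Then `H = g^(k+2)` sends
`v` and `u` to `g x`, and `q` and `y` to `q`, so each of the disjoint intervals `[q, w]` and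
`[x, y]` is mapped by `H` over `[q, g x]`, which contains both. This horseshoe yields, for
every word of length `m` in two letters, a point following it under `H`; these `2^m` points
form an `(l(k+2)m, (x-w)/2)`-separated set, so the entropy is at least `log 2 / (l(k+2))`. -/

open Set Function Topology

theorem isFixedPt_of_tendsto_iterate_nhdsWithin {α : Type*} [TopologicalSpace α] [T2Space α]
    {g : α → α} {s : Set α} {x y : α}
    (hy : Tendsto (fun n ↦ g^[n] x) atTop (𝓝[s] y)) (hg : ContinuousWithinAt g s y) :
    IsFixedPt g y := by
  refine tendsto_nhds_unique ?_ (hy.mono_right nhdsWithin_le_nhds)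
  refine (tendsto_add_atTop_iff_nat 1).1 ?_
  simp only [iterate_succ_apply']
  exact hg.tendsto.comp hy

theorem exists_le_iterate_of_lt_self {g : ℝ → ℝ} {a b z : ℝ} (hg : ContinuousOn g (Icc a b))
    (hlt : ∀ y ∈ Ioo a b, y < g y) (hb : g b ≠ b) (hz : z ∈ Ioo a b) :
    ∃ k, b ≤ g^[k] z := by
  by_contra! h
  have hmem : ∀ k, g^[k] z ∈ Ioo a b := by
    intro k
    induction k with
    | zero => exact hz
    | succ k ih => exact ⟨ih.1.trans (iterate_succ_apply' g k z ▸ hlt _ ih), h (k + 1)⟩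
  have hmono : Monotone fun k ↦ g^[k] z := monotone_nat_of_le_succ fun k ↦ by
    rw [iterate_succ_apply']
    exact (hlt _ (hmem k)).le
  have hbdd : BddAbove (range fun k ↦ g^[k] z) := ⟨b, forall_mem_range.2 fun k ↦ (hmem k).2.le⟩
  set L := ⨆ k, g^[k] z
  have hL : L ∈ Ioc a b := ⟨(hmem 0).1.trans_le (le_ciSup hbdd 0), ciSup_le fun k ↦ (hmem k).2.le⟩
  have hfix : IsFixedPt g L := isFixedPt_of_tendsto_iterate_nhdsWithin
    (tendsto_nhdsWithin_iff.2 ⟨tendsto_atTop_ciSup hmono hbdd,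
      Eventually.of_forall fun k ↦ Ioo_subset_Icc_self (hmem k)⟩)
    (hg L (Ioc_subset_Icc_self hL))
  rcases hL.2.lt_or_eq with hLb | rfl
  · exact (hlt L ⟨hL.1, hLb⟩).ne' hfix
  · exact hb hfix

theorem exists_mem_Ioo_iterate_eq {g : ℝ → ℝ} {I : Set ℝ} {q x : ℝ} (hg : ContinuousOn g I)
    (hgI : MapsTo g I I) (hI : Icc q x ⊆ I) (hq : g q = q) (hqx : q < x)
    (hlt : ∀ y ∈ Ioo q x, y < g y) (hx : g x ≠ x) : ∃ w ∈ Ioo q x, ∃ k, g^[k] w = x := by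
  obtain ⟨z, hqz, hzx⟩ := exists_between hqx
  obtain ⟨k, hk⟩ := exists_le_iterate_of_lt_self (hg.mono hI) hlt hx ⟨hqz, hzx⟩
  have hkq : g^[k] q = q := iterate_fixed hq k
  obtain ⟨w, hw, hkw⟩ : x ∈ g^[k] '' Icc q z :=
    isPreconnected_Icc.intermediate_value (left_mem_Icc.2 hqz.le) (right_mem_Icc.2 hqz.le)
      ((hg.iterate hgI k).mono ((Icc_subset_Icc_right hzx.le).trans hI))
      ⟨by rw [hkq]; exact hqx.le, hk⟩
  have hwq : w ≠ q := by
    rintro rfl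
    exact hqx.ne (hkq ▸ hkw)
  exact ⟨w, ⟨hw.1.lt_of_ne' hwq, hw.2.trans_lt hzx⟩, k, hkw⟩

theorem Icc_subset_image_iterate_of_homoclinic {g : ℝ → ℝ} {I : Set ℝ} {q w x y : ℝ} {k : ℕ}
    (hg : ContinuousOn g I) (hgI : MapsTo g I I) (hI : Icc q (g x) ⊆ I) (hq : g q = q)
    (hqw : q < w) (hwx : w < x) (hw : w < g w) (hkw : g^[k] w = x)
    (hy : y ∈ Ioo x (g x)) (hyq : g y = q) :
    Icc q (g x) ⊆ g^[k + 2] '' Icc q w ∧ Icc q (g x) ⊆ g^[k + 2] '' Icc x y := by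
  have hH : ContinuousOn g^[k + 2] I := hg.iterate hgI _
  have hI₀ : Icc q w ⊆ I := (Icc_subset_Icc_right (hwx.trans (hy.1.trans hy.2)).le).trans hI
  have hI₁ : Icc x y ⊆ I := (Icc_subset_Icc (hqw.trans hwx).le hy.2.le).trans hI
  obtain ⟨v, hv, hvw⟩ : w ∈ g '' Icc q w :=
    isPreconnected_Icc.intermediate_value (left_mem_Icc.2 hqw.le) (right_mem_Icc.2 hqw.le)
      (hg.mono hI₀) ⟨by rw [hq]; exact hqw.le, hw.le⟩
  obtain ⟨u, hu, huw⟩ : w ∈ g '' Icc x y :=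
    isPreconnected_Icc.intermediate_value (right_mem_Icc.2 hy.1.le) (left_mem_Icc.2 hy.1.le)
      (hg.mono hI₁) ⟨by rw [hyq]; exact hqw.le, (hwx.trans (hy.1.trans hy.2)).le⟩
  have hHw : ∀ z, g z = w → g^[k + 2] z = g x := fun z hz ↦ by
    rw [iterate_succ_apply', iterate_succ_apply, hz, hkw]
  have hHq : g^[k + 2] q = q := iterate_fixed hq _
  have hHy : g^[k + 2] y = q := by rw [iterate_succ_apply, hyq, iterate_fixed hq]
  constructor
  · simpa only [hHq, hHw v hvw] using
      isPreconnected_Icc.intermediate_value (left_mem_Icc.2 hqw.le) hv (hH.mono hI₀)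
  · simpa only [hHy, hHw u huw] using
      isPreconnected_Icc.intermediate_value (right_mem_Icc.2 hy.1.le) hu (hH.mono hI₁)

theorem exists_mem_forall_iterate_mem {α ι : Type*} {H : α → α} {C : Set α} {J : ι → Set α}
    (hC : C.Nonempty) (hJC : ∀ i, J i ⊆ C) (hCJ : ∀ i, C ⊆ H '' J i) :
    ∀ (m : ℕ) (a : Fin m → ι), ∃ z ∈ C, ∀ k : Fin m, H^[k] z ∈ J (a k) := by
  intro m
  induction m with
  | zero => exact fun _ ↦ ⟨hC.some, hC.some_mem, fun k ↦ k.elim0⟩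
  | succ m ih =>
    intro a
    obtain ⟨z', hz'C, hz'⟩ := ih (Fin.tail a)
    obtain ⟨z, hz, rfl⟩ := hCJ (a 0) hz'C
    refine ⟨z, hJC _ hz, Fin.cases hz fun k ↦ ?_⟩
    simpa only [Fin.tail, Fin.val_succ, iterate_succ_apply] using hz' k

theorem card_le_sepCard {f : ℝ → ℝ} {I : Set ℝ} {n : ℕ} {ε : ℝ} {S : Finset ℝ} (hSI : ↑S ⊆ I)
    (hS : ∀ x ∈ S, ∀ y ∈ S, x ≠ y → ∃ m < n, ε < |f^[m] x - f^[m] y|) :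
    (S.card : ℝ≥0∞) ≤ sepCard f I n ε :=
  le_sSup ⟨S, hSI, rfl, hS⟩

section Horseshoe

variable {f : ℝ → ℝ} {I C : Set ℝ} {ι : Type*} {J : ι → Set ℝ} {p : ℕ} {ε : ℝ}

theorem card_pow_le_sepCard_of_horseshoe [Fintype ι] (hp : 0 < p) (hε : 0 ≤ ε) (hCI : C ⊆ I)
    (hC : C.Nonempty) (hJC : ∀ i, J i ⊆ C) (hCJ : ∀ i, C ⊆ f^[p] '' J i)
    (hsep : Pairwise fun i j ↦ ∀ a ∈ J i, ∀ b ∈ J j, ε < |a - b|) (m : ℕ) :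
    (Fintype.card ι : ℝ≥0∞) ^ m ≤ sepCard f I (p * m) ε := by
  choose Z hZC hZ using exists_mem_forall_iterate_mem hC hJC hCJ m
  have hZsep : ∀ a b, a ≠ b → ∃ t < p * m, ε < |f^[t] (Z a) - f^[t] (Z b)| := by
    intro a b hab
    obtain ⟨k, hk⟩ := Function.ne_iff.1 hab
    refine ⟨p * k, Nat.mul_lt_mul_of_pos_left k.2 hp, ?_⟩
    rw [iterate_mul]
    exact hsep hk _ (hZ a k) _ (hZ b k)
  have hZinj : Injective Z := fun a b hab ↦ by
    by_contra hne
    obtain ⟨t, -, ht⟩ := hZsep a b hne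
    rw [hab, sub_self, abs_zero] at ht
    exact ht.not_ge hε
  calc (Fintype.card ι : ℝ≥0∞) ^ m = ((Finset.univ.image Z).card : ℝ≥0∞) := by
        rw [Finset.card_image_of_injective _ hZinj, Finset.card_univ, Fintype.card_fun,
          Fintype.card_fin]
        push_cast
        rfl
    _ ≤ sepCard f I (p * m) ε := by
      refine card_le_sepCard ?_ ?_
      · simpa only [Finset.coe_image, Finset.coe_univ, image_univ, range_subset_iff]
          using fun a ↦ hCI (hZC a)
      · simp only [Finset.mem_image, Finset.mem_univ, true_and]
        rintro _ ⟨a, rfl⟩ _ ⟨b, rfl⟩ hab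
        exact hZsep a b (ne_of_apply_ne Z hab)

theorem log_div_le_topEntropy {b : ℝ≥0∞} (hp : 0 < p) (hε : 0 < ε)
    (h : ∀ m, b ^ m ≤ sepCard f I (p * m) ε) : ENNReal.log b / p ≤ topEntropy f I := by
  refine le_iSup₂_of_le ε hε (le_limsup_of_frequently_le' (frequently_atTop.2 fun N ↦ ?_))
  refine ⟨p * (N + 1), by nlinarith, ?_⟩
  have hN : ((N + 1 : ℕ) : EReal) ≠ 0 := by exact_mod_cast N.succ_ne_zero
  calc ENNReal.log b / p = ENNReal.log b * (N + 1 : ℕ) / (p * (N + 1 : ℕ)) :=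
        (EReal.mul_div_mul_cancel (EReal.natCast_ne_bot _) (EReal.natCast_ne_top _) hN).symm
    _ = ENNReal.log (b ^ (N + 1)) / (p * (N + 1) : ℕ) := by
        rw [ENNReal.log_pow, mul_comm]
        norm_cast
    _ ≤ ENNReal.log (sepCard f I (p * (N + 1)) ε) / (p * (N + 1) : ℕ) :=
        EReal.div_le_div_right_of_nonneg (by positivity) (ENNReal.log_monotone (h _))

theorem topEntropy_pos_of_horseshoe [Fintype ι] [Nontrivial ι] (hp : 0 < p) (hε : 0 < ε)
    (hCI : C ⊆ I) (hC : C.Nonempty) (hJC : ∀ i, J i ⊆ C) (hCJ : ∀ i, C ⊆ f^[p] '' J i)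
    (hsep : Pairwise fun i j ↦ ∀ a ∈ J i, ∀ b ∈ J j, ε < |a - b|) :
    0 < topEntropy f I := by
  have hlog : 0 < ENNReal.log (Fintype.card ι) / p :=
    EReal.div_pos (ENNReal.zero_lt_log_iff.2 (by exact_mod_cast Fintype.one_lt_card))
      (by exact_mod_cast hp) (EReal.natCast_ne_top p)
  exact hlog.trans_le <| log_div_le_topEntropy hp hε
    (card_pow_le_sepCard_of_horseshoe hp hε.le hCI hC hJC hCJ hsep)

end Horseshoe

theorem pos_entropy_of_lemma_two_configuration_general
    (A B : ℝ) (f : ℝ → ℝ)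
    (hf : ContinuousOn f (Set.Icc A B))
    (hmap : Set.MapsTo f (Set.Icc A B) (Set.Icc A B))
    (l : ℕ) (hl : 1 ≤ l)
    (x q : ℝ)
    (hxI : x ∈ Set.Icc A B) (hqI : q ∈ Set.Icc A B)
    (hx : x < f^[l] x)
    (hq : f^[l] q = q) (hqx : q < x)
    (hinc : ∀ y ∈ Set.Ioo q x, y < f^[l] y)
    (y : ℝ) (hy : y ∈ Set.Ioo x (f^[l] x)) (hyq : f^[l] y = q) :
    0 < topEntropy f (Set.Icc A B) := by
  have hg : ContinuousOn f^[l] (Icc A B) := hf.iterate hmap l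
  have hgI : MapsTo f^[l] (Icc A B) (Icc A B) := hmap.iterate l
  have hC : Icc q (f^[l] x) ⊆ Icc A B := Icc_subset_Icc hqI.1 (hgI hxI).2
  obtain ⟨w, ⟨hqw, hwx⟩, k, hkw⟩ := exists_mem_Ioo_iterate_eq hg hgI
    ((Icc_subset_Icc_right hx.le).trans hC) hq hqx hinc hx.ne'
  obtain ⟨hcov₀, hcov₁⟩ := Icc_subset_image_iterate_of_homoclinic hg hgI hC hq hqw hwx
    (hinc w ⟨hqw, hwx⟩) hkw hy hyq
  rw [← iterate_mul] at hcov₀ hcov₁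
  have hsep : ∀ a ∈ Icc q w, ∀ b ∈ Icc x y, (x - w) / 2 < |a - b| := fun a ha b hb ↦ by
    rw [abs_sub_comm, lt_abs]
    exact Or.inl (by linarith [ha.2, hb.1])
  refine topEntropy_pos_of_horseshoe (J := fun i ↦ cond i (Icc x y) (Icc q w))
    (Nat.mul_pos hl (k + 1).succ_pos) (half_pos (sub_pos.2 hwx)) hC
    ⟨q, left_mem_Icc.2 (hqx.trans hx).le⟩ (Bool.forall_bool.2 ⟨?_, ?_⟩)
    (Bool.forall_bool.2 ⟨hcov₀, hcov₁⟩) ?_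
  · exact Icc_subset_Icc_right (hwx.trans hx).le
  · exact Icc_subset_Icc (hqx.le) hy.2.le
  · rintro (_ | _) (_ | _) hij a ha b hb
    · exact absurd rfl hij
    · exact hsep a ha b hb
    · rw [abs_sub_comm]
      exact hsep b hb a ha
    · exact absurd rfl hij

/-- The configuration of Lemma 2 (a homoclinic point for `f^l`) forces positive
topological entropy. -/
theorem pos_entropy_of_lemma_two_configuration
    (A B : ℝ) (f : ℝ → ℝ)
    (hf : ContinuousOn f (Set.Icc A B))
    (hmap : Set.MapsTo f (Set.Icc A B) (Set.Icc A B))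
    (l : ℕ) (hl : 1 ≤ l)
    (x v₁ v₂ q : ℝ)
    (hxI : x ∈ Set.Icc A B) (hqI : q ∈ Set.Icc A B)
    (hxV : x ∈ Set.Ioo v₁ v₂)
    (hmono : StrictMonoOn (f^[l]) (Set.Ioo v₁ v₂))
    (hx : x < f^[l] x)
    (hq : f^[l] q = q) (hqx : q < x)
    (hVq : f^[l] v₁ < q)
    (hinc : ∀ y ∈ Set.Ioo q x, y < f^[l] y)
    (h2l : f^[l] (f^[l] x) < x)
    (y : ℝ) (hy : y ∈ Set.Ioo x (f^[l] x)) (hyq : f^[l] y = q) :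
    0 < topEntropy f (Set.Icc A B) :=
  pos_entropy_of_lemma_two_configuration_general A B f hf hmap l hl x q hxI hqI hx hq hqx hinc y hy
    hyq
end
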